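/- Let A be a brace of cardinality p^n with p > n + 1 prime, and suppose a, a' ∈ A satisfy p²(a − a') = 0. Then for every y ∈ A, p((pa) * y) = p((pa') * y). -/

import Mathlib

/-- A left brace: an abelian group `(A,+)` together with a group operation `circ`
(whose identity is `0`) satisfying `a ∘ (b + c) + a = a ∘ b + a ∘ c`. -/
structure LeftBrace (A : Type*) [AddCommGroup A] where
  circ : A → A → A
  inv : A → A
  circ_assoc : ∀ a b c, circ (circ a b) c = circ a (circ b c)
  circ_zero : ∀ a, circ a 0 = a
  zero_circ : ∀ a, circ 0 a = a
  inv_circ : ∀ a, circ (inv a) a = 0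
  compat : ∀ a b c, circ a (b + c) + a = circ a b + circ a c

namespace LeftBrace

variable {A : Type*} [AddCommGroup A]

/-- The star operation `a * b = a ∘ b - a - b`. -/
def star (B : LeftBrace A) (a b : A) : A := B.circ a b - a - b

/-- `circPow B a n` is the product `a ∘ a ∘ ⋯ ∘ a` of `n` copies of `a`. -/
def circPow (B : LeftBrace A) (a : A) : ℕ → A
  | 0 => 0
  | n + 1 => B.circ a (B.circPow a n)

end LeftBrace


/-!
The λ-map `λ_a b = a ∘ b - a` is a homomorphism from `(A, ∘)` to the additive automorphisms of
`A`, and `a * b = λ_a b - b`. Writing `p a = p a' ∘ t` gives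
`(p a) * y = (p a') * y + λ_{p a'} (t * y)` with `p t = 0`, so it suffices to show that `p t = 0`
forces `p (t * y) = 0`.

For such `t` put `N = λ_t - 1`. As `λ_t` has `p`-power order, the kernel of `N` on an
`N`-stable subgroup `S ≠ 0` is a fixed-point set of size `≡ |S| [MOD p]`, so `|N S| * p ∣ |S|`; since
`|A| = p ^ n` this gives `N ^ n = 0`, hence `N ^ (p - 1) = 0`. All binomial coefficients `C(p, k)`
with `0 < k < p` are divisible by `p`, so `∑_{i<p} (1 + N) ^ i = p u` with `u` a unit. Then
`t^{∘p} = ∑_{i<p} λ_t^i t = u (p t) = 0`, so `λ_t ^ p = 1`, and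
`0 = λ_t ^ p - 1 = (∑_{i<p} λ_t ^ i) N = u (p N)` yields `p N = 0`.
-/

open Finset

namespace AddMonoid.End

variable {A : Type*} [AddCommGroup A]

theorem card_map_mul_prime_dvd_card [Finite A] {p e : ℕ} [Fact p.Prime] {N : AddMonoid.End A}
    (hunip : (1 + N) ^ p ^ e = 1) {S : AddSubgroup A} (hS : ∀ x ∈ S, N x ∈ S)
    (hpS : p ∣ Nat.card S) : Nat.card (S.map N) * p ∣ Nat.card S := by
  classical
  have : Fintype S := Fintype.ofFinite S
  let f : Function.End S := fun x => ⟨x + N x, S.add_mem x.2 (hS x x.2)⟩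
  have hf (k : ℕ) (x : S) : ((f ^ k) x : A) = ((1 + N) ^ k) x := by
    induction k generalizing x with
    | zero => rfl
    | succ k ih => rw [pow_succ, pow_succ, coe_mul]; exact ih (f x)
  have hfe : f ^ p ^ e = 1 := funext fun x => Subtype.ext <| by rw [hf, hunip]; rfl
  let K := (AddMonoidHom.ker N).addSubgroupOf S
  have hK : (K : Set S) = f.fixedPoints := by
    ext x
    change N x = 0 ↔ _
    simp [Function.IsFixedPt, f, Subtype.ext_iff]
  have hpK : p ∣ Nat.card K := by
    have hmod := Equiv.Perm.card_fixedPoints_modEq hfe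
    rw [← Nat.card_eq_fintype_card, ← Nat.card_eq_fintype_card, ← hK] at hmod
    exact Nat.modEq_zero_iff_dvd.1 (hmod.symm.trans (Nat.modEq_zero_iff_dvd.2 hpS))
  have hindex : K.index = Nat.card (S.map N) := AddSubgroup.relIndex_ker S N
  rw [← K.card_mul_index, hindex, mul_comm (Nat.card K)]
  exact mul_dvd_mul_left _ hpK

theorem pow_apply_eq_zero_of_card_dvd [Finite A] {p e : ℕ} [hp : Fact p.Prime]
    {N : AddMonoid.End A} (hunip : (1 + N) ^ p ^ e = 1) (m : ℕ) {S : AddSubgroup A}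
    (hS : ∀ x ∈ S, N x ∈ S) (hcard : Nat.card S ∣ p ^ m) {x : A} (hx : x ∈ S) :
    (N ^ m) x = 0 := by
  induction m generalizing S x with
  | zero =>
    rw [pow_zero, Nat.dvd_one, AddSubgroup.card_eq_one] at hcard
    subst hcard
    rw [AddSubgroup.mem_bot.1 hx, map_zero]
  | succ m ih =>
    rw [pow_succ, coe_mul, Function.comp_apply]
    obtain ⟨k, -, hk⟩ := (Nat.dvd_prime_pow hp.out).1 hcard
    rcases k with _ | k
    · rw [pow_zero, AddSubgroup.card_eq_one] at hk
      subst hk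
      rw [AddSubgroup.mem_bot.1 hx, map_zero, map_zero]
    refine ih (S := S.map N) (fun _ ⟨y, hy, hyx⟩ => hyx ▸ ⟨N y, hS y hy, rfl⟩) ?_ ⟨x, hx, rfl⟩
    refine Nat.dvd_of_mul_dvd_mul_right hp.out.pos ?_
    rw [← pow_succ]
    exact (card_map_mul_prime_dvd_card hunip hS (hk ▸ dvd_pow_self p k.succ_ne_zero)).trans hcard

theorem pow_eq_zero_of_one_add_pow_eq_one [Finite A] {p n e : ℕ} [Fact p.Prime]
    (hcard : Nat.card A = p ^ n) {N : AddMonoid.End A} (hunip : (1 + N) ^ p ^ e = 1) :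
    N ^ n = 0 := by
  ext x
  exact pow_apply_eq_zero_of_card_dvd hunip n (S := ⊤) (fun _ _ => trivial)
    (by rw [AddSubgroup.card_top, hcard]) trivial

end AddMonoid.End

theorem geom_sum_one_add_eq_sum_choose {R : Type*} [Ring R] (N : R) (k : ℕ) :
    ∑ i ∈ range k, (1 + N) ^ i = ∑ m ∈ range k, (k.choose (m + 1) : R) * N ^ m := by
  have := congrArg (Polynomial.aeval (R := ℤ) N) (Polynomial.geom_sum_X_comp_X_add_one_eq_sum k)
  simpa [Polynomial.aeval_comp, add_comm] using this

theorem exists_isUnit_geom_sum_one_add_eq {R : Type*} [Ring R] {p : ℕ} (hp : p.Prime) {N : R}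
    (hN : N ^ (p - 1) = 0) : ∃ u, IsUnit u ∧ ∑ i ∈ range p, (1 + N) ^ i = p * u := by
  obtain ⟨q, rfl⟩ : ∃ q, p = q + 2 := ⟨p - 2, by have := hp.two_le; omega⟩
  set c : ℕ → ℕ := fun m => (q + 2).choose (m + 2) / (q + 2)
  have hc (m : ℕ) (hm : m < q) : (q + 2).choose (m + 2) = (q + 2) * c m :=
    (Nat.mul_div_cancel' (hp.dvd_choose_self (by omega) (by omega))).symm
  set w := ∑ m ∈ range q, (c m : R) * N ^ m
  have hw : Commute N w := Commute.sum_right _ _ _ fun m _ =>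
    (Nat.cast_commute _ N).symm.mul_right ((Commute.refl N).pow_right m)
  refine ⟨1 + N * w, (hw.isNilpotent_mul_right ⟨_, hN⟩).isUnit_one_add, ?_⟩
  have hN' : N ^ (q + 1) = 0 := hN
  rw [geom_sum_one_add_eq_sum_choose, sum_range_succ, sum_range_succ', Nat.choose_self, hN',
    mul_zero, add_zero, zero_add, Nat.choose_one_right, pow_zero, mul_one, mul_add, mul_one,
    add_comm, mul_sum, mul_sum]
  refine congrArg (_ + ·) (sum_congr rfl fun m hm => ?_)
  rw [hc m (mem_range.1 hm), Nat.cast_mul, pow_succ', mul_assoc, ← mul_assoc _ N,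
    (Nat.cast_commute _ N).eq, mul_assoc]

namespace LeftBrace

variable {A : Type*} [AddCommGroup A] (B : LeftBrace A)

abbrev toGroup : Group A where
  mul := B.circ
  one := 0
  inv := B.inv
  mul_assoc := B.circ_assoc
  one_mul := B.zero_circ
  mul_one := B.circ_zero
  inv_mul_cancel := B.inv_circ

lemma circ_inv (a : A) : B.circ a (B.inv a) = 0 :=
  let _ := B.toGroup
  mul_inv_cancel a

lemma circPow_card [Finite A] (a : A) : B.circPow a (Nat.card A) = 0 := by
  let _ := B.toGroup
  have hpow (k : ℕ) : B.circPow a k = a ^ k := by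
    induction k with
    | zero => rfl
    | succ k ih => rw [circPow, ih, pow_succ']; rfl
  rw [hpow]
  exact pow_card_eq_one'

def lam (a : A) : AddMonoid.End A :=
  AddMonoidHom.mk' (fun b => B.circ a b - a) fun b c => by
    rw [← add_sub_cancel_right (B.circ a (b + c)) a, B.compat]
    abel

@[simp] lemma lam_apply (a b : A) : B.lam a b = B.circ a b - a := rfl

lemma circ_eq_add_lam (a b : A) : B.circ a b = a + B.lam a b := by
  rw [lam_apply, add_sub_cancel]

lemma star_eq_lam_sub (a b : A) : B.star a b = B.lam a b - b := by
  rw [star, lam_apply, sub_right_comm]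

@[simp] lemma lam_zero : B.lam 0 = 1 := by
  ext b
  rw [lam_apply, zero_circ, sub_zero]
  rfl

lemma lam_circ (a b : A) : B.lam (B.circ a b) = B.lam a * B.lam b := by
  ext c
  rw [AddMonoid.End.coe_mul, Function.comp_apply, lam_apply, circ_assoc, circ_eq_add_lam,
    circ_eq_add_lam B b, circ_eq_add_lam B a, map_add, lam_apply]
  abel

lemma lam_circPow (a : A) (k : ℕ) : B.lam (B.circPow a k) = B.lam a ^ k := by
  induction k with
  | zero => exact B.lam_zero
  | succ k ih => rw [circPow, lam_circ, ih, pow_succ']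

lemma circPow_eq_geom_sum (a : A) (k : ℕ) :
    B.circPow a k = (∑ i ∈ range k, B.lam a ^ i) a := by
  induction k with
  | zero => rfl
  | succ k ih =>
    rw [circPow, circ_eq_add_lam, ih, geom_sum_succ, add_comm]
    rfl

lemma lam_injective (a : A) : Function.Injective (B.lam a) := by
  refine Function.LeftInverse.injective (g := B.lam (B.inv a)) fun b => ?_
  rw [← Function.comp_apply (f := B.lam (B.inv a)), ← AddMonoid.End.coe_mul, ← lam_circ,
    inv_circ, lam_zero]
  rfl

lemma star_circ_left (a b c : A) :
    B.star (B.circ a b) c = B.star a c + B.lam a (B.star b c) := by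
  rw [star_eq_lam_sub, star_eq_lam_sub, star_eq_lam_sub, lam_circ, map_sub,
    AddMonoid.End.coe_mul, Function.comp_apply]
  abel

theorem nsmul_star_eq_zero [Finite A] {p n : ℕ} (hp : p.Prime) (hn : n < p)
    (hcard : Nat.card A = p ^ n) {t : A} (ht : p • t = 0) (y : A) : p • B.star t y = 0 := by
  have : Fact p.Prime := ⟨hp⟩
  obtain ⟨N, hlam, hN⟩ : ∃ N : AddMonoid.End A, B.lam t = 1 + N ∧ ∀ b, N b = B.star t b :=
    ⟨B.lam t - 1, (add_sub_cancel 1 _).symm, fun _ => rfl⟩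
  have hNn : N ^ n = 0 := by
    refine AddMonoid.End.pow_eq_zero_of_one_add_pow_eq_one hcard (e := n) ?_
    rw [← hlam, ← lam_circPow, ← hcard, circPow_card, lam_zero]
  obtain ⟨u, hu, hsum⟩ := exists_isUnit_geom_sum_one_add_eq hp (pow_eq_zero_of_le (by omega) hNn)
  have hpow : B.lam t ^ p = 1 := by
    rw [← lam_circPow, circPow_eq_geom_sum, hlam, hsum, (Nat.cast_commute p u).eq,
      AddMonoid.End.coe_mul, Function.comp_apply, AddMonoid.End.natCast_apply, ht, map_zero,
      lam_zero]
  have hpN : (p : AddMonoid.End A) * N = 0 := by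
    have h := geom_sum_mul (B.lam t) p
    rw [hpow, sub_self, hlam, add_sub_cancel_left, hsum, (Nat.cast_commute p u).eq,
      mul_assoc] at h
    exact hu.mul_right_eq_zero.1 h
  calc p • B.star t y = ((p : AddMonoid.End A) * N) y := by rw [← hN]; rfl
    _ = 0 := by rw [hpN]; rfl

end LeftBrace

/-- Let A be a brace of cardinality p^n, p > n + 1 prime. If p²(a - a') = 0 then
p((pa) * y) = p((pa') * y) for every y. -/
theorem stmt7 {A : Type*} [AddCommGroup A] [Fintype A] (B : LeftBrace A) (p n : ℕ)
    (hp : p.Prime) (hpn : n + 1 < p) (hcard : Fintype.card A = p ^ n)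
    (a a' : A) (h : p ^ 2 • (a - a') = 0) (y : A) :
    p • B.star (p • a) y = p • B.star (p • a') y := by
  set t := B.circ (B.inv (p • a')) (p • a)
  have hpa : B.circ (p • a') t = p • a := by rw [← B.circ_assoc, B.circ_inv, B.zero_circ]
  have hpt : p • t = 0 := by
    refine B.lam_injective (p • a') ?_
    rw [map_nsmul, map_zero, ← add_sub_cancel_left (p • a') (B.lam (p • a') t),
      ← B.circ_eq_add_lam, hpa, smul_sub, smul_smul, smul_smul, ← pow_two, ← smul_sub, h]
  rw [← hpa, B.star_circ_left, smul_add, ← map_nsmul,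
    B.nsmul_star_eq_zero hp (by omega) (Nat.card_eq_fintype_card.trans hcard) hpt, map_zero,
    add_zero]
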